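/- Let (A, μ, Δ, R) be a quasi-triangular bialgebra with R = Σ sᵢ ⊗ tᵢ, M an A-module with action λ, α_A : A → A a bialgebra morphism with (α_A ⊗ α_A)(R) = R, and α_M : M → M a linear map satisfying α_M ∘ λ = λ ∘ (α_A ⊗ α_M). Then the operator B_α : M ⊗ M → M ⊗ M defined by B_α(v ⊗ w) = Σ α_M(λ(tᵢ, w)) ⊗ α_M(λ(sᵢ, v)) is a solution of the Hom-Yang-Baxter equation for (M, α_M). -/

import Mathlib

/-!
From `(Δ ⊗ id)(R) = R₁₃R₂₃` and `Δᵒᵖ(x) R = R Δ(x)` one gets the quantum Yang–Baxter equation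
`R₁₂R₁₃R₂₃ = R₂₃R₁₃R₁₂`. On `M ⊗ M ⊗ M` each side of the braid relation for the untwisted
braiding `c(v ⊗ w) = Σ tᵢw ⊗ sᵢv` acts as the corresponding side of this equation followed by
the reversal of the three factors, so `c` solves the Yang–Baxter equation. Since `α_A ⊗ α_A`
fixes `R` and `α_M` intertwines the actions, `α_M ⊗ α_M` commutes with `c`; hence in the braid
relation for `B_α = (α_M ⊗ α_M) ∘ c` all copies of `α_M ⊗ α_M ⊗ α_M` can be collected in front,
reducing it to the braid relation for `c`.
-/

open TensorProduct

variable {k : Type*} [CommRing k] {A : Type*} [AddCommGroup A] [Module k A]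

/-- Componentwise product on `A ⊗ A` induced by a bilinear multiplication `μ`. -/
noncomputable def mulT2 (μ : A →ₗ[k] A →ₗ[k] A) (X Y : A ⊗[k] A) : A ⊗[k] A :=
  ((TensorProduct.map (TensorProduct.lift μ) (TensorProduct.lift μ)) ∘ₗ
    (TensorProduct.tensorTensorTensorComm k A A A A).toLinearMap) (X ⊗ₜ[k] Y)

/-- Componentwise product on `(A ⊗ A) ⊗ A` induced by `μ`. -/
noncomputable def mulT3 (μ : A →ₗ[k] A →ₗ[k] A) (X Y : (A ⊗[k] A) ⊗[k] A) :
    (A ⊗[k] A) ⊗[k] A :=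
  ((TensorProduct.map
      ((TensorProduct.map (TensorProduct.lift μ) (TensorProduct.lift μ)) ∘ₗ
        (TensorProduct.tensorTensorTensorComm k A A A A).toLinearMap)
      (TensorProduct.lift μ)) ∘ₗ
    (TensorProduct.tensorTensorTensorComm k (A ⊗[k] A) A (A ⊗[k] A) A).toLinearMap)
    (X ⊗ₜ[k] Y)

/-- `R₁₂ = R ⊗ c`. -/
noncomputable def R12e (c : A) (R : A ⊗[k] A) : (A ⊗[k] A) ⊗[k] A := R ⊗ₜ[k] c

/-- `R₂₃ = c ⊗ R`. -/
noncomputable def R23e (c : A) (R : A ⊗[k] A) : (A ⊗[k] A) ⊗[k] A :=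
  (TensorProduct.assoc k A A A).symm (c ⊗ₜ[k] R)

/-- `R₁₃ = (τ ⊗ Id)(R₂₃)`. -/
noncomputable def R13e (c : A) (R : A ⊗[k] A) : (A ⊗[k] A) ⊗[k] A :=
  TensorProduct.map (TensorProduct.comm k A A).toLinearMap LinearMap.id (R23e c R)

variable {M : Type*} [AddCommGroup M] [Module k M]

/-- `B_α(v ⊗ w) = Σ α_M(λ(tᵢ, w)) ⊗ α_M(λ(sᵢ, v))` for `R = Σ sᵢ ⊗ tᵢ`. -/
noncomputable def Balpha (lam : A →ₗ[k] M →ₗ[k] M) (αM : M →ₗ[k] M) (R : A ⊗[k] A) :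
    M ⊗[k] M →ₗ[k] M ⊗[k] M :=
  TensorProduct.map αM αM ∘ₗ (TensorProduct.comm k M M).toLinearMap ∘ₗ
    (TensorProduct.homTensorHomMap (RingHom.id k) M M M M) (TensorProduct.map lam lam R)

section YangBaxter

noncomputable def conjAssoc (F : M ⊗[k] (M ⊗[k] M) →ₗ[k] M ⊗[k] (M ⊗[k] M)) :
    (M ⊗[k] M) ⊗[k] M →ₗ[k] (M ⊗[k] M) ⊗[k] M :=
  (TensorProduct.assoc k M M M).symm.toLinearMap ∘ₗ F ∘ₗ (TensorProduct.assoc k M M M).toLinearMap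

def IsYangBaxter (B : M ⊗[k] M →ₗ[k] M ⊗[k] M) : Prop :=
  conjAssoc (B.lTensor M) ∘ₗ B.rTensor M ∘ₗ conjAssoc (B.lTensor M)
    = B.rTensor M ∘ₗ conjAssoc (B.lTensor M) ∘ₗ B.rTensor M

def IsHomYangBaxter (f : M →ₗ[k] M) (B : M ⊗[k] M →ₗ[k] M ⊗[k] M) : Prop :=
  map f f ∘ₗ B = B ∘ₗ map f f ∧
    conjAssoc (map f B) ∘ₗ map B f ∘ₗ conjAssoc (map f B)
      = map B f ∘ₗ conjAssoc (map f B) ∘ₗ map B f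

theorem IsYangBaxter.isHomYangBaxter_map_comp {f : M →ₗ[k] M} {B : M ⊗[k] M →ₗ[k] M ⊗[k] M}
    (hB : IsYangBaxter B) (hf : map f f ∘ₗ B = B ∘ₗ map f f) :
    IsHomYangBaxter f (map f f ∘ₗ B) := by
  have hf' (x : M ⊗[k] M) : map f f (B x) = B (map f f x) := LinearMap.congr_fun hf x
  set Φ := map (map f f) f
  have hleft : conjAssoc (map f (map f f ∘ₗ B)) = Φ ∘ₗ conjAssoc (B.lTensor M) :=
    TensorProduct.ext_threefold fun u v w => by simp [conjAssoc, Φ, map_map_assoc_symm]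
  have hright : map (map f f ∘ₗ B) f = Φ ∘ₗ B.rTensor M :=
    TensorProduct.ext_threefold fun u v w => by simp [Φ]
  have hΦleft (x) : conjAssoc (B.lTensor M) (Φ x) = Φ (conjAssoc (B.lTensor M) x) :=
    LinearMap.congr_fun (show conjAssoc (B.lTensor M) ∘ₗ Φ = Φ ∘ₗ conjAssoc (B.lTensor M) from
      TensorProduct.ext_threefold fun u v w => by simp [conjAssoc, Φ, map_map_assoc_symm, hf']) x
  have hΦright (x) : B.rTensor M (Φ x) = Φ (B.rTensor M x) :=
    LinearMap.congr_fun (show B.rTensor M ∘ₗ Φ = Φ ∘ₗ B.rTensor M from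
      TensorProduct.ext_threefold fun u v w => by simp [Φ, hf']) x
  refine ⟨by rw [LinearMap.comp_assoc, hf], ?_⟩
  rw [hleft, hright]
  refine LinearMap.ext fun x => ?_
  simp only [LinearMap.comp_apply, hΦleft, hΦright]
  exact congrArg (fun y => Φ (Φ (Φ y))) (LinearMap.congr_fun hB x)

end YangBaxter

section Product

variable (μ : A →ₗ[k] A →ₗ[k] A)

@[simp]
lemma mulT2_tmul (a b a' b' : A) : mulT2 μ (a ⊗ₜ[k] b) (a' ⊗ₜ[k] b') = μ a a' ⊗ₜ[k] μ b b' := by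
  simp [mulT2]

@[simp]
lemma mulT2_add_left (X X' Y : A ⊗[k] A) :
    mulT2 μ (X + X') Y = mulT2 μ X Y + mulT2 μ X' Y := by
  simp [mulT2, add_tmul]

@[simp]
lemma mulT2_add_right (X Y Y' : A ⊗[k] A) :
    mulT2 μ X (Y + Y') = mulT2 μ X Y + mulT2 μ X Y' := by
  simp [mulT2, tmul_add]

@[simp]
lemma mulT2_zero_left (Y : A ⊗[k] A) : mulT2 μ 0 Y = 0 := by simp [mulT2]

@[simp]
lemma mulT2_zero_right (X : A ⊗[k] A) : mulT2 μ X 0 = 0 := by simp [mulT2]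

@[simp]
lemma mulT3_tmul (X Y : A ⊗[k] A) (c d : A) :
    mulT3 μ (X ⊗ₜ[k] c) (Y ⊗ₜ[k] d) = mulT2 μ X Y ⊗ₜ[k] μ c d := by
  simp [mulT3, mulT2]

@[simp]
lemma mulT3_add_left (X X' Y : (A ⊗[k] A) ⊗[k] A) :
    mulT3 μ (X + X') Y = mulT3 μ X Y + mulT3 μ X' Y := by
  simp [mulT3, add_tmul]

@[simp]
lemma mulT3_add_right (X Y Y' : (A ⊗[k] A) ⊗[k] A) :
    mulT3 μ X (Y + Y') = mulT3 μ X Y + mulT3 μ X Y' := by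
  simp [mulT3, tmul_add]

@[simp]
lemma mulT3_zero_left (Y : (A ⊗[k] A) ⊗[k] A) : mulT3 μ 0 Y = 0 := by simp [mulT3]

@[simp]
lemma mulT3_zero_right (X : (A ⊗[k] A) ⊗[k] A) : mulT3 μ X 0 = 0 := by simp [mulT3]

lemma mulT2_assoc (hassoc : ∀ x y z : A, μ (μ x y) z = μ x (μ y z)) (X Y Z : A ⊗[k] A) :
    mulT2 μ (mulT2 μ X Y) Z = mulT2 μ X (mulT2 μ Y Z) := by
  induction X using TensorProduct.induction_on with
  | zero => simp
  | add X X' hX hX' => simp [hX, hX']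
  | tmul a b =>
    induction Y using TensorProduct.induction_on with
    | zero => simp
    | add Y Y' hY hY' => simp [hY, hY']
    | tmul a' b' =>
      induction Z using TensorProduct.induction_on with
      | zero => simp
      | add Z Z' hZ hZ' => simp only [mulT2_add_right, hZ, hZ']
      | tmul a'' b'' => simp [hassoc]

lemma mulT3_assoc (hassoc : ∀ x y z : A, μ (μ x y) z = μ x (μ y z))
    (X Y Z : (A ⊗[k] A) ⊗[k] A) :
    mulT3 μ (mulT3 μ X Y) Z = mulT3 μ X (mulT3 μ Y Z) := by
  induction X using TensorProduct.induction_on with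
  | zero => simp
  | add X X' hX hX' => simp [hX, hX']
  | tmul X c =>
    induction Y using TensorProduct.induction_on with
    | zero => simp
    | add Y Y' hY hY' => simp [hY, hY']
    | tmul Y d =>
      induction Z using TensorProduct.induction_on with
      | zero => simp
      | add Z Z' hZ hZ' => simp only [mulT3_add_right, hZ, hZ']
      | tmul Z e => simp [hassoc, mulT2_assoc μ hassoc]

lemma comm_mulT2 (X Y : A ⊗[k] A) :
    TensorProduct.comm k A A (mulT2 μ X Y)
      = mulT2 μ (TensorProduct.comm k A A X) (TensorProduct.comm k A A Y) := by
  induction X using TensorProduct.induction_on with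
  | zero => simp
  | add X X' hX hX' => simp [hX, hX']
  | tmul a b =>
    induction Y using TensorProduct.induction_on with
    | zero => simp
    | add Y Y' hY hY' => simp [hY, hY']
    | tmul a' b' => simp

lemma map_comm_id_mulT3 (X Y : (A ⊗[k] A) ⊗[k] A) :
    map (TensorProduct.comm k A A).toLinearMap LinearMap.id (mulT3 μ X Y)
      = mulT3 μ (map (TensorProduct.comm k A A).toLinearMap LinearMap.id X)
          (map (TensorProduct.comm k A A).toLinearMap LinearMap.id Y) := by
  induction X using TensorProduct.induction_on with
  | zero => simp
  | add X X' hX hX' => simp [hX, hX']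
  | tmul X c =>
    induction Y using TensorProduct.induction_on with
    | zero => simp
    | add Y Y' hY hY' => simp [hY, hY']
    | tmul Y d => simp [comm_mulT2]

end Product

lemma map_comm_id_R13e (c : A) (R : A ⊗[k] A) :
    map (TensorProduct.comm k A A).toLinearMap LinearMap.id (R13e c R) = R23e c R := by
  rw [R13e, ← LinearMap.comp_apply, ← map_comp]
  simp

lemma map_comm_id_R23e (c : A) (R : A ⊗[k] A) :
    map (TensorProduct.comm k A A).toLinearMap LinearMap.id (R23e c R) = R13e c R := rfl

section QuasiTriangular

variable (μ : A →ₗ[k] A →ₗ[k] A) (Δ : A →ₗ[k] A ⊗[k] A) (one : A) (R : A ⊗[k] A)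

lemma R12e_intertwines (h1l : ∀ x : A, μ one x = x) (h1r : ∀ x : A, μ x one = x)
    (hR3 : ∀ x : A, mulT2 μ ((TensorProduct.comm k A A) (Δ x)) R = mulT2 μ R (Δ x))
    (Z : A ⊗[k] A) :
    mulT3 μ (R12e one R) (map Δ LinearMap.id Z)
      = mulT3 μ (map ((TensorProduct.comm k A A).toLinearMap ∘ₗ Δ) LinearMap.id Z)
          (R12e one R) := by
  induction Z using TensorProduct.induction_on with
  | zero => simp
  | add X Y hX hY => simp only [map_add, mulT3_add_left, mulT3_add_right, hX, hY]
  | tmul a c => simp [R12e, h1l, h1r, hR3]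

theorem quantum_yang_baxter (hassoc : ∀ x y z : A, μ (μ x y) z = μ x (μ y z))
    (h1l : ∀ x : A, μ one x = x) (h1r : ∀ x : A, μ x one = x)
    (hR3 : ∀ x : A, mulT2 μ ((TensorProduct.comm k A A) (Δ x)) R = mulT2 μ R (Δ x))
    (hR1 : map Δ LinearMap.id R = mulT3 μ (R13e one R) (R23e one R)) :
    mulT3 μ (R12e one R) (mulT3 μ (R13e one R) (R23e one R))
      = mulT3 μ (R23e one R) (mulT3 μ (R13e one R) (R12e one R)) := by
  have hR1op : map ((TensorProduct.comm k A A).toLinearMap ∘ₗ Δ) LinearMap.id R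
      = mulT3 μ (R23e one R) (R13e one R) := by
    rw [← LinearMap.comp_id LinearMap.id, map_comp, LinearMap.comp_apply, hR1,
      map_comm_id_mulT3, map_comm_id_R13e, map_comm_id_R23e]
  rw [← hR1, R12e_intertwines μ Δ one R h1l h1r hR3, hR1op, mulT3_assoc μ hassoc]

end QuasiTriangular

section Braiding

variable (lam : A →ₗ[k] M →ₗ[k] M)

noncomputable def braiding : A ⊗[k] A →ₗ[k] M ⊗[k] M →ₗ[k] M ⊗[k] M :=
  LinearMap.llcomp k (M ⊗[k] M) (M ⊗[k] M) (M ⊗[k] M) (TensorProduct.comm k M M).toLinearMap ∘ₗ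
    TensorProduct.homTensorHomMap (RingHom.id k) M M M M ∘ₗ map lam lam

lemma Balpha_eq_comp_braiding (αM : M →ₗ[k] M) (R : A ⊗[k] A) :
    Balpha lam αM R = map αM αM ∘ₗ braiding lam R := rfl

@[simp]
lemma braiding_tmul (a b : A) (v w : M) :
    braiding lam (a ⊗ₜ[k] b) (v ⊗ₜ[k] w) = lam b w ⊗ₜ[k] lam a v := by
  simp [braiding]

noncomputable def reversedAction :
    (A ⊗[k] A) ⊗[k] A →ₗ[k] (M ⊗[k] M) ⊗[k] M →ₗ[k] (M ⊗[k] M) ⊗[k] M :=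
  LinearMap.llcomp k ((M ⊗[k] M) ⊗[k] M) ((M ⊗[k] M) ⊗[k] M) ((M ⊗[k] M) ⊗[k] M)
      ((TensorProduct.assoc k M M M).symm.toLinearMap ∘ₗ
        (TensorProduct.comm k M M).toLinearMap.lTensor M ∘ₗ
        (TensorProduct.comm k (M ⊗[k] M) M).toLinearMap) ∘ₗ
    TensorProduct.homTensorHomMap (RingHom.id k) (M ⊗[k] M) M (M ⊗[k] M) M ∘ₗ
    map (TensorProduct.homTensorHomMap (RingHom.id k) M M M M ∘ₗ map lam lam) lam

@[simp]
lemma reversedAction_tmul (a b c : A) (u v w : M) :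
    reversedAction lam ((a ⊗ₜ[k] b) ⊗ₜ[k] c) ((u ⊗ₜ[k] v) ⊗ₜ[k] w)
      = (lam c w ⊗ₜ[k] lam b v) ⊗ₜ[k] lam a u := by
  simp [reversedAction]

variable (μ : A →ₗ[k] A →ₗ[k] A) (one : A)

lemma braid_left_apply (h1l : ∀ x : A, μ one x = x) (h1r : ∀ x : A, μ x one = x)
    (hmod1 : ∀ a b : A, ∀ x : M, lam (μ a b) x = lam a (lam b x))
    (R₁ R₂ R₃ : A ⊗[k] A) (u v w : M) :
    conjAssoc ((braiding lam R₃).lTensor M) ((braiding lam R₂).rTensor M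
        (conjAssoc ((braiding lam R₁).lTensor M) ((u ⊗ₜ[k] v) ⊗ₜ[k] w)))
      = reversedAction lam (mulT3 μ (R12e one R₃) (mulT3 μ (R13e one R₂) (R23e one R₁)))
          ((u ⊗ₜ[k] v) ⊗ₜ[k] w) := by
  induction R₁ using TensorProduct.induction_on with
  | zero => simp [conjAssoc, R12e, R13e, R23e]
  | add _ _ h h' => simp_all [conjAssoc, R12e, R13e, R23e, tmul_add]
  | tmul a₁ b₁ =>
  induction R₂ using TensorProduct.induction_on with
  | zero => simp [conjAssoc, R12e, R13e, R23e]
  | add _ _ h h' => simp_all [conjAssoc, R12e, R13e, R23e, tmul_add]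
  | tmul a₂ b₂ =>
  induction R₃ using TensorProduct.induction_on with
  | zero => simp [conjAssoc, R12e, R13e, R23e]
  | add _ _ h h' => simp_all [conjAssoc, R12e, R13e, R23e, add_tmul]
  | tmul a₃ b₃ => simp [conjAssoc, R12e, R13e, R23e, h1l, h1r, hmod1]

lemma braid_right_apply (h1l : ∀ x : A, μ one x = x) (h1r : ∀ x : A, μ x one = x)
    (hmod1 : ∀ a b : A, ∀ x : M, lam (μ a b) x = lam a (lam b x))
    (R₁ R₂ R₃ : A ⊗[k] A) (u v w : M) :
    (braiding lam R₃).rTensor M (conjAssoc ((braiding lam R₂).lTensor M)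
        ((braiding lam R₁).rTensor M ((u ⊗ₜ[k] v) ⊗ₜ[k] w)))
      = reversedAction lam (mulT3 μ (R23e one R₃) (mulT3 μ (R13e one R₂) (R12e one R₁)))
          ((u ⊗ₜ[k] v) ⊗ₜ[k] w) := by
  induction R₁ using TensorProduct.induction_on with
  | zero => simp [conjAssoc, R12e, R13e, R23e]
  | add _ _ h h' => simp_all [conjAssoc, R12e, R13e, R23e, add_tmul]
  | tmul a₁ b₁ =>
  induction R₂ using TensorProduct.induction_on with
  | zero => simp [conjAssoc, R12e, R13e, R23e]
  | add _ _ h h' => simp_all [conjAssoc, R12e, R13e, R23e, tmul_add]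
  | tmul a₂ b₂ =>
  induction R₃ using TensorProduct.induction_on with
  | zero => simp [conjAssoc, R12e, R13e, R23e]
  | add _ _ h h' => simp_all [conjAssoc, R12e, R13e, R23e, tmul_add]
  | tmul a₃ b₃ => simp [conjAssoc, R12e, R13e, R23e, h1l, h1r, hmod1]

theorem braiding_isYangBaxter (h1l : ∀ x : A, μ one x = x) (h1r : ∀ x : A, μ x one = x)
    (hmod1 : ∀ a b : A, ∀ x : M, lam (μ a b) x = lam a (lam b x)) (R : A ⊗[k] A)
    (hqybe : mulT3 μ (R12e one R) (mulT3 μ (R13e one R) (R23e one R))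
      = mulT3 μ (R23e one R) (mulT3 μ (R13e one R) (R12e one R))) :
    IsYangBaxter (braiding lam R) := by
  refine TensorProduct.ext_threefold fun u v w => ?_
  simp only [LinearMap.comp_apply]
  rw [braid_left_apply lam μ one h1l h1r hmod1, braid_right_apply lam μ one h1l h1r hmod1, hqybe]

lemma map_comp_braiding (αA : A →ₗ[k] A) (αM : M →ₗ[k] M)
    (hcomm : ∀ a : A, ∀ x : M, αM (lam a x) = lam (αA a) (αM x)) (R : A ⊗[k] A) :
    map αM αM ∘ₗ braiding lam R = braiding lam (map αA αA R) ∘ₗ map αM αM := by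
  induction R using TensorProduct.induction_on with
  | zero => simp
  | add X Y hX hY => simp [LinearMap.comp_add, LinearMap.add_comp, hX, hY]
  | tmul a b => ext v w; simp [hcomm]

end Braiding

theorem classical_module_gives_hybe_solution_general
    (μ : A →ₗ[k] A →ₗ[k] A) (Δ : A →ₗ[k] A ⊗[k] A) (one : A)
    (R : A ⊗[k] A)
    (hassoc : ∀ x y z : A, μ (μ x y) z = μ x (μ y z))
    (h1l : ∀ x : A, μ one x = x) (h1r : ∀ x : A, μ x one = x)
    -- quasi-triangularity of (A, R):
    (hR1 : TensorProduct.map Δ LinearMap.id R = mulT3 μ (R13e one R) (R23e one R))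
    (hR3 : ∀ x : A, mulT2 μ ((TensorProduct.comm k A A) (Δ x)) R = mulT2 μ R (Δ x))
    -- M is an A-module:
    (lam : A →ₗ[k] M →ₗ[k] M)
    (hmod1 : ∀ a b : A, ∀ x : M, lam (μ a b) x = lam a (lam b x))
    -- α_A is a bialgebra morphism fixing R:
    (αA : A →ₗ[k] A)
    (hinv : TensorProduct.map αA αA R = R)
    -- α_M is compatible with the action:
    (αM : M →ₗ[k] M)
    (hcomm : ∀ a : A, ∀ x : M, αM (lam a x) = lam (αA a) (αM x)) :
    (TensorProduct.map αM αM ∘ₗ Balpha lam αM R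
        = Balpha lam αM R ∘ₗ TensorProduct.map αM αM) ∧
    (((TensorProduct.assoc k M M M).symm.toLinearMap ∘ₗ
          TensorProduct.map αM (Balpha lam αM R) ∘ₗ
          (TensorProduct.assoc k M M M).toLinearMap) ∘ₗ
        TensorProduct.map (Balpha lam αM R) αM ∘ₗ
        ((TensorProduct.assoc k M M M).symm.toLinearMap ∘ₗ
          TensorProduct.map αM (Balpha lam αM R) ∘ₗ
          (TensorProduct.assoc k M M M).toLinearMap)
      = TensorProduct.map (Balpha lam αM R) αM ∘ₗ
        ((TensorProduct.assoc k M M M).symm.toLinearMap ∘ₗ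
          TensorProduct.map αM (Balpha lam αM R) ∘ₗ
          (TensorProduct.assoc k M M M).toLinearMap) ∘ₗ
        TensorProduct.map (Balpha lam αM R) αM) := by
  have hYB : IsYangBaxter (braiding lam R) :=
    braiding_isYangBaxter lam μ one h1l h1r hmod1 R
      (quantum_yang_baxter μ Δ one R hassoc h1l h1r hR3 hR1)
  have hα : map αM αM ∘ₗ braiding lam R = braiding lam R ∘ₗ map αM αM := by
    rw [map_comp_braiding lam αA αM hcomm, hinv]
  rw [Balpha_eq_comp_braiding]
  exact hYB.isHomYangBaxter_map_comp hα

/-- If `(A, μ, Δ, R)` is a quasi-triangular bialgebra, `M` an `A`-module,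
`α_A` a bialgebra morphism with `(α_A ⊗ α_A)(R) = R`, and `α_M` a linear map compatible
with the action, then `B_α` is a solution of the Hom-Yang-Baxter equation for `(M, α_M)`. -/
theorem classical_module_gives_hybe_solution
    (μ : A →ₗ[k] A →ₗ[k] A) (Δ : A →ₗ[k] A ⊗[k] A) (ε : A →ₗ[k] k) (one : A)
    (R : A ⊗[k] A)
    (hassoc : ∀ x y z : A, μ (μ x y) z = μ x (μ y z))
    (h1l : ∀ x : A, μ one x = x) (h1r : ∀ x : A, μ x one = x)
    (hcoassoc : (TensorProduct.assoc k A A A).toLinearMap ∘ₗ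
        TensorProduct.map Δ LinearMap.id ∘ₗ Δ = TensorProduct.map LinearMap.id Δ ∘ₗ Δ)
    (hεl : ∀ x : A, (TensorProduct.lid k A) (TensorProduct.map ε LinearMap.id (Δ x)) = x)
    (hεr : ∀ x : A, (TensorProduct.rid k A) (TensorProduct.map LinearMap.id ε (Δ x)) = x)
    (hcompat : ∀ x y : A, Δ (μ x y) = mulT2 μ (Δ x) (Δ y))
    (hΔ1 : Δ one = one ⊗ₜ[k] one)
    (hε1 : ε one = 1) (hεμ : ∀ x y : A, ε (μ x y) = ε x * ε y)
    -- quasi-triangularity of (A, R):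
    (hR1 : TensorProduct.map Δ LinearMap.id R = mulT3 μ (R13e one R) (R23e one R))
    (hR2 : (TensorProduct.assoc k A A A).symm (TensorProduct.map LinearMap.id Δ R)
      = mulT3 μ (R13e one R) (R12e one R))
    (hR3 : ∀ x : A, mulT2 μ ((TensorProduct.comm k A A) (Δ x)) R = mulT2 μ R (Δ x))
    -- M is an A-module:
    (lam : A →ₗ[k] M →ₗ[k] M)
    (hmod1 : ∀ a b : A, ∀ x : M, lam (μ a b) x = lam a (lam b x))
    (hmod2 : ∀ x : M, lam one x = x)
    -- α_A is a bialgebra morphism fixing R: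
    (αA : A →ₗ[k] A)
    (hαμ : ∀ x y : A, αA (μ x y) = μ (αA x) (αA y))
    (hαΔ : Δ ∘ₗ αA = TensorProduct.map αA αA ∘ₗ Δ)
    (hinv : TensorProduct.map αA αA R = R)
    -- α_M is compatible with the action:
    (αM : M →ₗ[k] M)
    (hcomm : ∀ a : A, ∀ x : M, αM (lam a x) = lam (αA a) (αM x)) :
    (TensorProduct.map αM αM ∘ₗ Balpha lam αM R
        = Balpha lam αM R ∘ₗ TensorProduct.map αM αM) ∧
    (((TensorProduct.assoc k M M M).symm.toLinearMap ∘ₗ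
          TensorProduct.map αM (Balpha lam αM R) ∘ₗ
          (TensorProduct.assoc k M M M).toLinearMap) ∘ₗ
        TensorProduct.map (Balpha lam αM R) αM ∘ₗ
        ((TensorProduct.assoc k M M M).symm.toLinearMap ∘ₗ
          TensorProduct.map αM (Balpha lam αM R) ∘ₗ
          (TensorProduct.assoc k M M M).toLinearMap)
      = TensorProduct.map (Balpha lam αM R) αM ∘ₗ
        ((TensorProduct.assoc k M M M).symm.toLinearMap ∘ₗ
          TensorProduct.map αM (Balpha lam αM R) ∘ₗ
          (TensorProduct.assoc k M M M).toLinearMap) ∘ₗ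
        TensorProduct.map (Balpha lam αM R) αM) :=
  classical_module_gives_hybe_solution_general μ Δ one R hassoc h1l h1r hR1 hR3 lam hmod1 αA hinv αM
    hcomm
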